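/- arXiv:1201.1467 — 2 statements merged into one kernel-verified Lean document; each statement's English description precedes it below -/
import Mathlib

section
/- For any Finsler manifold (M,F), neither the foliation V'TM (the G-orthogonal complement of the vertical Liouville field L inside the vertical distribution) nor the foliation V^⊥TM (the G-orthogonal complement of L in TTM) is totally geodesic with respect to the Levi-Civita connection of the Sasaki metric G on TM: for both foliations the second fundamental form satisfies H(∂̄/∂̄y^a, ∂̄/∂̄y^b) = −(1/F²) g_{ab} L, which cannot vanish since the matrix (g_{ab}) is positive definite. -/
/-!
A local-coordinate framework for the geometry of the tangent bundle `TM` of an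
`n`-dimensional Finsler manifold `(M, F)`, following the paper
"A frame on tangent bundle of a Finsler manifold and the natural foliations".

All geometric objects are described through their components on a chart domain
`U` of `TM` (avoiding the zero section): a point `p : Pt n` is the pair of
coordinates `(x^i, y^i)`, and a vector field on `TM` is given by its
components in the natural frame `(∂/∂x^i, ∂/∂y^i)`.
-/

open scoped BigOperators

noncomputable section

namespace FinslerFoliations

/-- A point of the tangent bundle `TM` in local coordinates:
`p.1 = (x^i)` is the base point and `p.2 = (y^i)` is the fibre coordinate. -/
abbrev Pt (n : ℕ) : Type := (Fin n → ℝ) × (Fin n → ℝ)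

/-- A (local) vector field on `TM`, given by its components in the natural
frame: `(X p).1 i` is the coefficient of `∂/∂x^i` and `(X p).2 i` the one of
`∂/∂y^i`. -/
abbrev VF (n : ℕ) : Type := Pt n → Pt n

variable {n : ℕ}

/-- The coordinate vector `∂/∂x^i`. -/
def ex (i : Fin n) : Pt n := (Pi.single i 1, 0)

/-- The coordinate vector `∂/∂y^i`. -/
def ey (i : Fin n) : Pt n := (0, Pi.single i 1)

/-- Partial derivative of a scalar function in the constant direction `v`. -/
def pd (v : Pt n) (f : Pt n → ℝ) (p : Pt n) : ℝ := fderiv ℝ f p v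

/-- Derivative of a scalar function along a vector field. -/
def Dv (X : VF n) (f : Pt n → ℝ) (p : Pt n) : ℝ := fderiv ℝ f p (X p)

/-- The Lie bracket of two vector fields, in coordinates. -/
def lie (X Y : VF n) : VF n := fun p => fderiv ℝ Y p (X p) - fderiv ℝ X p (Y p)

/-- Local-coordinate data of an `n`-dimensional Finsler manifold `(M, F)` on a
chart domain `U ⊆ TM` avoiding the zero section: the fundamental function `F`
(smooth, positive and positively `1`-homogeneous in `y`), the fundamental
tensor `g_{ij} = ½ ∂²F²/∂y^i∂y^j` (symmetric and positive definite) with its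
inverse `g^{ij}`, the spray coefficients
`G^i = (g^{ij}/4)(∂²F²/∂y^j∂x^k y^k − ∂F²/∂x^j)` and the nonlinear connection
coefficients `G_i^j = ∂G^j/∂y^i`. -/
structure Chart (n : ℕ) : Type where
  /-- the chart domain in `TM` -/
  U : Set (Pt n)
  hUopen : IsOpen U
  hUslit : ∀ p ∈ U, p.2 ≠ 0
  /-- the fundamental function `F` -/
  F : Pt n → ℝ
  Fpos : ∀ p ∈ U, 0 < F p
  Fsmooth : ContDiffOn ℝ (⊤ : ℕ∞) F U
  Fhomog : ∀ p ∈ U, ∀ t : ℝ, 0 < t → (p.1, t • p.2) ∈ U →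
    F (p.1, t • p.2) = t * F p
  /-- the fundamental tensor `g_{ij}` -/
  g : Fin n → Fin n → Pt n → ℝ
  gdef : ∀ i j, ∀ p ∈ U,
    g i j p = (1/2) * pd (ey i) (pd (ey j) (fun q => F q ^ 2)) p
  gsmooth : ∀ i j, ContDiffOn ℝ (⊤ : ℕ∞) (g i j) U
  gsymm : ∀ i j, ∀ p ∈ U, g i j p = g j i p
  gposdef : ∀ p ∈ U, ∀ v : Fin n → ℝ, v ≠ 0 →
    0 < ∑ i, ∑ j, g i j p * v i * v j
  /-- the inverse `g^{ij}` of the fundamental tensor -/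
  ginv : Fin n → Fin n → Pt n → ℝ
  hginv : ∀ i j, ∀ p ∈ U,
    (∑ k, g i k p * ginv k j p) = if i = j then (1:ℝ) else 0
  /-- the spray coefficients `G^i` -/
  spray : Fin n → Pt n → ℝ
  spraydef : ∀ i, ∀ p ∈ U, spray i p = (1/4) * ∑ j, ginv i j p *
      ((∑ k, pd (ey j) (pd (ex k) (fun q => F q ^ 2)) p * p.2 k)
        - pd (ex j) (fun q => F q ^ 2) p)
  /-- the nonlinear connection coefficients `G_i^j` -/
  N : Fin n → Fin n → Pt n → ℝ
  Ndef : ∀ i j, ∀ p ∈ U, N i j p = pd (ey i) (spray j) p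
  Nsmooth : ∀ i j, ContDiffOn ℝ (⊤ : ℕ∞) (N i j) U

variable (fc : Chart n)

/-- the vertical frame field `∂/∂y^i`. -/
def dyv (i : Fin n) : VF n := fun _ => ey i

/-- the horizontal frame field `δ/δx^i = ∂/∂x^i − G_i^j ∂/∂y^j`. -/
def ddx (i : Fin n) : VF n := fun p => (Pi.single i 1, fun j => -(fc.N i j p))

/-- the vertical Liouville vector field `L = y^i ∂/∂y^i`. -/
def LV : VF n := fun p => ((0 : Fin n → ℝ), p.2)

/-- the horizontal Liouville vector field `ξ = y^i δ/δx^i`. -/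
def XI : VF n := fun p => (p.2, fun j => -(∑ i, p.2 i * fc.N i j p))

/-- the dual coframe `δy^i = dy^i + G_j^i dx^j`, applied to a tangent vector. -/
def dely (i : Fin n) (p : Pt n) (v : Pt n) : ℝ := v.2 i + ∑ j, fc.N j i p * v.1 j

/-- the Sasaki lifted metric `G = g_{ij} dx^i ⊗ dx^j + g_{ij} δy^i ⊗ δy^j`. -/
def Gs (p : Pt n) (v w : Pt n) : ℝ :=
  ∑ i, ∑ j, fc.g i j p * (v.1 i * w.1 j + dely fc i p v * dely fc j p w)

/-- the natural almost complex structure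
`J = δ/δx^i ⊗ δy^i − ∂/∂y^i ⊗ dx^i`, as a pointwise endomorphism. -/
def Jm (p : Pt n) (v : Pt n) : Pt n :=
  (fun i => dely fc i p v,
   fun k => -(∑ i, dely fc i p v * fc.N i k p) - v.1 k)

/-- `J` applied to a vector field. -/
def Jvf (X : VF n) : VF n := fun p => Jm fc p (X p)

/-- the curvature coefficients `R^k_{ij} = δG_i^k/δx^j − δG_j^k/δx^i` of the
nonlinear connection. -/
def Rc (i j k : Fin n) (p : Pt n) : ℝ :=
  Dv (ddx fc j) (fc.N i k) p - Dv (ddx fc i) (fc.N j k) p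

/-- the Cartan tensor `g_{ijk} = ½ ∂g_{ij}/∂y^k`. -/
def Cartan (i j k : Fin n) (p : Pt n) : ℝ := (1/2) * pd (ey k) (fc.g i j) p

/-- the vertical adapted frame field `∂̄/∂̄y^a = E_a^i ∂/∂y^i`. -/
def vb (E : Fin (n-1) → Fin n → Pt n → ℝ) (a : Fin (n-1)) : VF n :=
  fun p => ((0 : Fin n → ℝ), fun i => E a i p)

/-- the horizontal adapted frame field `δ̄/δ̄x^a = J(∂̄/∂̄y^a)`. -/
def hb (E : Fin (n-1) → Fin n → Pt n → ℝ) (a : Fin (n-1)) : VF n :=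
  fun p => Jm fc p (vb E a p)

/-- `E` is the coefficient matrix of an adapted local frame
`∂̄/∂̄y^a = E_a^i ∂/∂y^i`, `a = 1, …, n−1`, of the distribution `V'TM` (the
`G`-orthogonal complement of the vertical Liouville field `L` inside the
vertical distribution `VTM`): the coefficients are smooth, pointwise linearly
independent, and each `∂̄/∂̄y^a` is `G`-orthogonal to `L`. -/
def IsAdaptedFrame (E : Fin (n-1) → Fin n → Pt n → ℝ) : Prop :=
  (∀ a i, ContDiffOn ℝ (⊤ : ℕ∞) (E a i) fc.U) ∧
  (∀ p ∈ fc.U, LinearIndependent ℝ (fun a : Fin (n-1) => (fun i => E a i p))) ∧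
  (∀ a, ∀ p ∈ fc.U, Gs fc p (vb E a p) (LV p) = 0)

/-- `g_{ab} = g_{ij} E_a^i E_b^j`, the components of the Sasaki metric in the
adapted frame. -/
def gb (E : Fin (n-1) → Fin n → Pt n → ℝ) (p : Pt n) (a b : Fin (n-1)) : ℝ :=
  ∑ i, ∑ j, fc.g i j p * E a i p * E b j p

/-- the matrix `(g_{ab})`. -/
def gbMat (E : Fin (n-1) → Fin n → Pt n → ℝ) (p : Pt n) :
    Matrix (Fin (n-1)) (Fin (n-1)) ℝ :=
  Matrix.of fun a b => gb fc E p a b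

/-- `(g^{ab})`, the inverse of the matrix `(g_{ab})`. -/
def gbInv (E : Fin (n-1) → Fin n → Pt n → ℝ) (p : Pt n) (a b : Fin (n-1)) : ℝ :=
  (gbMat fc E p)⁻¹ a b

/-- `g_{abc} = ½ E_a^i E_b^j E_c^k g_{ijk}`, the Cartan tensor in the adapted
frame. -/
def CartanBar (E : Fin (n-1) → Fin n → Pt n → ℝ) (a b c : Fin (n-1))
    (p : Pt n) : ℝ :=
  (1/2) * ∑ i, ∑ j, ∑ k, E a i p * E b j p * E c k p * Cartan fc i j k p

/-- `R_{cab} = E_c^i E_a^j E_b^k R^h_{jk} g_{hi}`, the lowered curvature of the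
nonlinear connection in the adapted frame. -/
def Rlow (E : Fin (n-1) → Fin n → Pt n → ℝ) (c a b : Fin (n-1)) (p : Pt n) : ℝ :=
  ∑ i, ∑ j, ∑ k, ∑ h, E c i p * E a j p * E b k p * Rc fc j k h p * fc.g h i p

/-- `nab` is the Levi-Civita connection of the Sasaki metric `G` on the chart
domain, characterized by the Koszul formula
`2G(∇_X Y, Z) = X G(Y,Z) + Y G(X,Z) − Z G(X,Y)
  − G([X,Z],Y) − G([Y,Z],X) + G([X,Y],Z)`. -/
def IsLeviCivita (nab : VF n → VF n → VF n) : Prop :=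
  ∀ X Y Z : VF n,
    ContDiffOn ℝ (⊤ : ℕ∞) X fc.U → ContDiffOn ℝ (⊤ : ℕ∞) Y fc.U →
    ContDiffOn ℝ (⊤ : ℕ∞) Z fc.U → ∀ p ∈ fc.U,
    2 * Gs fc p (nab X Y p) (Z p) =
      Dv X (fun q => Gs fc q (Y q) (Z q)) p
      + Dv Y (fun q => Gs fc q (X q) (Z q)) p
      - Dv Z (fun q => Gs fc q (X q) (Y q)) p
      - Gs fc p (lie X Z p) (Y p)
      - Gs fc p (lie Y Z p) (X p)
      + Gs fc p (lie X Y p) (Z p)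

/-- the `G`-orthogonal projection of a vector field onto the line spanned by
the vertical Liouville field `L` (the normal direction to the indicatrix). -/
def projL (X : VF n) : VF n :=
  fun p => (Gs fc p (X p) (LV p) / Gs fc p (LV p) (LV p)) • LV p

/-- the curvature tensor `R(X,Y)Z = ∇_X ∇_Y Z − ∇_Y ∇_X Z − ∇_{[X,Y]} Z` of a
connection. -/
def curv (nab : VF n → VF n → VF n) (X Y Z : VF n) : VF n :=
  fun p => nab X (nab Y Z) p - nab Y (nab X Z) p - nab (lie X Y) Z p

/-- membership in `V'TM`: vertical and `G`-orthogonal to `L`. -/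
def InV' (p v : Pt n) : Prop := v.1 = 0 ∧ Gs fc p v (LV p) = 0

/-- membership in `V^⊥TM`: `G`-orthogonal to `L`. -/
def InVperp (p v : Pt n) : Prop := Gs fc p v (LV p) = 0

/-- membership in `HTM ⊕ ⟨L⟩`, the `G`-orthogonal complement of `V'TM`. -/
def InHL (p v : Pt n) : Prop := ∃ c : ℝ, ∀ i, dely fc i p v = c * p.2 i

/-- membership in the line spanned by the vertical Liouville field `L`. -/
def InL (p v : Pt n) : Prop := ∃ c : ℝ, v = c • LV p

/-- membership in the plane spanned by `L` and `ξ`. -/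
def InLXi (p v : Pt n) : Prop := ∃ c d : ℝ, v = c • LV p + d • XI fc p

/-- membership in the `G`-orthogonal complement of `⟨L, ξ⟩`. -/
def InLXiPerp (p v : Pt n) : Prop :=
  Gs fc p v (LV p) = 0 ∧ Gs fc p v (XI fc p) = 0

/-- the contact `1`-form `η = y^i g_{ij} dx^j` of the indicatrix bundle,
applied to a tangent vector. -/
def etaC (p : Pt n) (v : Pt n) : ℝ := ∑ i, ∑ j, p.2 i * fc.g i j p * v.1 j

/-- the `(1,1)`-tensor `φ` of the contact structure of the indicatrix bundle:
`φ = J` on the contact distribution `D` and `φ(ξ) = 0`; on tangent vectors of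
`IM` it is given by `φ(v) = J v + η(v) L`. -/
def phiC (p : Pt n) (v : Pt n) : Pt n := Jm fc p v + etaC fc p v • LV p

/-- `φ` applied to a vector field. -/
def phiVF (X : VF n) : VF n := fun p => phiC fc p (X p)

/-- `η` applied to a vector field, as a scalar function. -/
def etaVF (X : VF n) : Pt n → ℝ := fun p => etaC fc p (X p)

/-- the exterior derivative `dη(X,Y) = X(η(Y)) − Y(η(X)) − η([X,Y])`. -/
def dEta (X Y : VF n) (p : Pt n) : ℝ :=
  Dv X (etaVF fc Y) p - Dv Y (etaVF fc X) p - etaC fc p (lie X Y p)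

/-- the normality tensor `N^{(1)} = [φ,φ] + 2 dη ⊗ ξ` of the contact structure
of the indicatrix bundle, evaluated on vector fields, where
`[φ,φ](X,Y) = φ²[X,Y] + [φX,φY] − φ[φX,Y] − φ[X,φY]` is the Nijenhuis torsion
of `φ`. -/
def Ntensor (X Y : VF n) : VF n := fun p =>
  phiC fc p (phiC fc p (lie X Y p)) + lie (phiVF fc X) (phiVF fc Y) p
    - phiC fc p (lie (phiVF fc X) Y p) - phiC fc p (lie X (phiVF fc Y) p)
    + (2 * dEta fc X Y p) • XI fc p

/-- a vector field of `TM` is tangent to the indicatrix bundle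
`IM = {F = 1}` (equivalently, `G`-orthogonal to the normal field `L` along
`IM`). -/
def TangentIM (X : VF n) : Prop :=
  ∀ p ∈ fc.U, fc.F p = 1 → Gs fc p (X p) (LV p) = 0

/-- The indicatrix bundle `IM`, with its natural contact metric structure
`(φ, η, ξ, Ḡ)`, is a Sasakian manifold: the contact structure is normal, i.e.
the tensor `N^{(1)} = [φ,φ] + 2 dη ⊗ ξ` vanishes on vector fields tangent to
`IM`. -/
def IsSasakianIM : Prop :=
  ∀ X Y : VF n, ContDiffOn ℝ (⊤ : ℕ∞) X fc.U → ContDiffOn ℝ (⊤ : ℕ∞) Y fc.U →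
    TangentIM fc X → TangentIM fc Y →
    ∀ p ∈ fc.U, fc.F p = 1 → Ntensor fc X Y p = 0

/-- the Nijenhuis tensor of the natural almost complex structure `J`:
`N_J(X,Y) = [JX,JY] − J[JX,Y] − J[X,JY] + J²[X,Y]`, with `J² = −Id`. -/
def NijJ (X Y : VF n) : VF n := fun p =>
  lie (Jvf fc X) (Jvf fc Y) p - Jm fc p (lie (Jvf fc X) Y p)
    - Jm fc p (lie X (Jvf fc Y) p) - lie X Y p

/-- the almost complex structure `J̄` on `TM ≅ IM × ℝ` induced by the contact
structure `(φ, η, ξ)` of the indicatrix bundle via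
`J̄(X + f L) = φ(X) − f ξ + η(X) L`, where `X` is tangent to `IM`;
a tangent vector `v` is decomposed as `v = vᵀ + f L` with
`f = G(v,L)/G(L,L)` and `vᵀ` tangent to the indicatrix. -/
def Jbar (p : Pt n) (v : Pt n) : Pt n :=
  phiC fc p (v - (Gs fc p v (LV p) / Gs fc p (LV p) (LV p)) • LV p)
    - (Gs fc p v (LV p) / Gs fc p (LV p) (LV p)) • XI fc p
    + etaC fc p (v - (Gs fc p v (LV p) / Gs fc p (LV p) (LV p)) • LV p) • LV p

/-!
Koszul's formula for `∇` with `X = ∂̄/∂̄y^a`, `Y = ∂̄/∂̄y^b`, `Z = L` computes `G(∇_X Y, L)`.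
The terms `X G(Y,L)` and `Y G(X,L)` vanish by orthogonality, `L(g_ij) = 0` because `g_ij` is
`0`-homogeneous, and differentiating `G(Y, L) = 0` along `X` (where `g_ij y^j = ½ ∂F²/∂y^i` by
Euler's theorem) gives `G(∂_X Y, L) = -g_ab`, so that `G([X,Y], L) = -g_ab + g_ba = 0`.
The remaining terms `L G(X,Y)`, `G([X,L],Y)`, `G([Y,L],X)` add up to `2 g_ab`, hence
`G(∇_X Y, L) = -g_ab`; with `G(L, L) = F²` (Euler again) this is the normal
component `-(1/F²) g_ab L`, and it cannot vanish for `a = b` since `g_aa > 0`.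
-/

open Filter Topology

section Calculus

variable {E F : Type*} [NormedAddCommGroup E] [NormedSpace ℝ E]
  [NormedAddCommGroup F] [NormedSpace ℝ F]

def IsFiberHomogeneousOn (U : Set (E × F)) (m : ℕ) (f : E × F → ℝ) : Prop :=
  ∀ p ∈ U, ∀ t : ℝ, 0 < t → (p.1, t • p.2) ∈ U → f (p.1, t • p.2) = t ^ m * f p

namespace IsFiberHomogeneousOn

variable {U : Set (E × F)} {m : ℕ} {f : E × F → ℝ}

/-- Euler's theorem for homogeneous functions. -/
theorem fderiv_apply_fiber (hf : IsFiberHomogeneousOn U m f) (hU : IsOpen U) {p : E × F}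
    (hp : p ∈ U) (hd : DifferentiableAt ℝ f p) :
    fderiv ℝ f p (0, p.2) = m * f p := by
  set γ : ℝ → E × F := fun t => (p.1, t • p.2)
  have hγ1 : γ 1 = p := by simp [γ]
  have hγ : HasDerivAt γ (0, p.2) 1 :=
    (hasDerivAt_const 1 p.1).prodMk (by simpa using (hasDerivAt_id (1 : ℝ)).smul_const p.2)
  have hcomp : HasDerivAt (f ∘ γ) (fderiv ℝ f p (0, p.2)) 1 :=
    HasFDerivAt.comp_hasDerivAt 1 (by rw [hγ1]; exact hd.hasFDerivAt) hγ
  have hev : f ∘ γ =ᶠ[𝓝 1] fun t => t ^ m * f p := by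
    have hcont : Continuous γ := continuous_const.prodMk (continuous_id.smul continuous_const)
    filter_upwards [hcont.continuousAt.eventually_mem (hU.mem_nhds (hγ1 ▸ hp)),
      eventually_gt_nhds one_pos] with t ht ht0
    exact hf p hp t ht0 ht
  have hpow : HasDerivAt (fun t : ℝ => t ^ m * f p) (m * f p) 1 := by
    simpa using (hasDerivAt_pow m (1 : ℝ)).mul_const (f p)
  exact hcomp.unique (hpow.congr_of_eventuallyEq hev)

theorem fderiv_apply_const_fiber (hf : IsFiberHomogeneousOn U m f) (hU : IsOpen U)
    (hd : DifferentiableOn ℝ f U) (hm : 1 ≤ m) (u : F) :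
    IsFiberHomogeneousOn U (m - 1) (fun q => fderiv ℝ f q (0, u)) := by
  intro p hp t ht hq
  set σ : E × F →L[ℝ] E × F :=
    (ContinuousLinearMap.id ℝ E).prodMap (t • ContinuousLinearMap.id ℝ F)
  have hσ : ∀ q : E × F, σ q = (q.1, t • q.2) := fun q => rfl
  have hev : f ∘ σ =ᶠ[𝓝 p] fun q => t ^ m * f q := by
    filter_upwards [σ.continuous.continuousAt.eventually_mem (hU.mem_nhds ((hσ p).symm ▸ hq)),
      hU.mem_nhds hp] with q hσq hq'
    exact hf q hq' t ht ((hσ q) ▸ hσq)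
  have hleft : HasFDerivAt (f ∘ σ) ((fderiv ℝ f (σ p)).comp σ) p :=
    (hd.differentiableAt (hU.mem_nhds ((hσ p).symm ▸ hq))).hasFDerivAt.comp p σ.hasFDerivAt
  have hright : HasFDerivAt (fun q => t ^ m * f q) (t ^ m • fderiv ℝ f p) p :=
    ((hd.differentiableAt (hU.mem_nhds hp)).hasFDerivAt).const_mul _
  have key := congrArg (· (0, u)) ((hleft.congr_of_eventuallyEq hev.symm).unique hright)
  have hσu : σ (0, u) = t • (0, u) := by simp [hσ]
  simp only [ContinuousLinearMap.comp_apply, hσu, map_smul, hσ, smul_eq_mul,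
    smul_apply] at key
  have hpow : t ^ m = t * t ^ (m - 1) := by rw [← pow_succ', Nat.sub_add_cancel hm]
  rw [hpow, mul_assoc] at key
  exact mul_left_cancel₀ ht.ne' key

end IsFiberHomogeneousOn

theorem contDiffOn_fderiv_apply_of_isOpen {U : Set E} (hU : IsOpen U) {f : E → F}
    (hf : ContDiffOn ℝ (⊤ : ℕ∞) f U) (v : E) :
    ContDiffOn ℝ (⊤ : ℕ∞) (fun q => fderiv ℝ f q v) U :=
  (hf.fderiv_of_isOpen hU (by decide)).clm_apply contDiffOn_const

theorem ContDiffOn.differentiableAt_of_isOpen {U : Set E} (hU : IsOpen U) {f : E → F}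
    (hf : ContDiffOn ℝ (⊤ : ℕ∞) f U) {p : E} (hp : p ∈ U) : DifferentiableAt ℝ f p :=
  (hf.contDiffAt (hU.mem_nhds hp)).differentiableAt (by decide)

theorem fderiv_fderiv_apply_const {f : E → F} {p : E}
    (hf : DifferentiableAt ℝ (fderiv ℝ f) p) (v w : E) :
    fderiv ℝ (fun q => fderiv ℝ f q v) p w = fderiv ℝ (fderiv ℝ f) p w v := by
  simp [fderiv_clm_apply hf (differentiableAt_const v)]

theorem fderiv_eq_zero_of_eqOn_zero {U : Set E} (hU : IsOpen U) {f : E → F}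
    (hf : ∀ q ∈ U, f q = 0) {p : E} (hp : p ∈ U) : fderiv ℝ f p = 0 := by
  have h : f =ᶠ[𝓝 p] fun _ => 0 := Filter.eventually_of_mem (hU.mem_nhds hp) hf
  rw [h.fderiv_eq, fderiv_const_apply]

end Calculus

theorem vertical_eq_sum_smul_ey (u : Fin n → ℝ) :
    ((0 : Fin n → ℝ), u) = ∑ i, u i • ey i := by
  ext j
  · simp [ey, Prod.fst_sum]
  · simp [ey, Prod.snd_sum, Finset.sum_apply, Pi.single_apply]

theorem hasFDerivAt_fiber_coord (j : Fin n) (p : Pt n) :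
    HasFDerivAt (fun q : Pt n => q.2 j)
      ((ContinuousLinearMap.proj j).comp (ContinuousLinearMap.snd ℝ _ _)) p :=
  ((ContinuousLinearMap.proj j).comp (ContinuousLinearMap.snd ℝ _ _)).hasFDerivAt (x := p)

def vertVF (u : Fin n → Pt n → ℝ) : VF n := fun p => (0, fun i => u i p)

theorem contDiffOn_vertVF {u : Fin n → Pt n → ℝ} {U : Set (Pt n)}
    (hu : ∀ i, ContDiffOn ℝ (⊤ : ℕ∞) (u i) U) : ContDiffOn ℝ (⊤ : ℕ∞) (vertVF u) U :=
  contDiffOn_const.prodMk (contDiffOn_pi.2 hu)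

theorem contDiffOn_LV (U : Set (Pt n)) : ContDiffOn ℝ (⊤ : ℕ∞) (LV : VF n) U :=
  contDiffOn_const.prodMk contDiffOn_snd

theorem fderiv_vertVF_apply {u : Fin n → Pt n → ℝ} {p : Pt n}
    (hu : ∀ i, DifferentiableAt ℝ (u i) p) (v : Pt n) :
    fderiv ℝ (vertVF u) p v = (0, fun i => fderiv ℝ (u i) p v) := by
  have h : HasFDerivAt (vertVF u)
      ((0 : Pt n →L[ℝ] (Fin n → ℝ)).prod (ContinuousLinearMap.pi fun i => fderiv ℝ (u i) p)) p :=
    (hasFDerivAt_const 0 p).prodMk (hasFDerivAt_pi.2 fun i => (hu i).hasFDerivAt)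
  rw [h.fderiv]
  rfl

theorem fderiv_LV_apply (p v : Pt n) : fderiv ℝ (LV : VF n) p v = (0, v.2) := by
  have h := fderiv_vertVF_apply (u := fun j q => q.2 j)
    (fun j => (hasFDerivAt_fiber_coord j p).differentiableAt) v
  simp only [(hasFDerivAt_fiber_coord _ p).fderiv] at h
  exact h

theorem lie_vertVF_LV {u : Fin n → Pt n → ℝ} {p : Pt n}
    (hu : ∀ i, DifferentiableAt ℝ (u i) p) :
    lie (vertVF u) LV p = (0, fun i => u i p - fderiv ℝ (u i) p (LV p)) := by
  rw [lie, fderiv_LV_apply, fderiv_vertVF_apply hu]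
  ext i <;> simp [vertVF]

theorem lie_vertVF_vertVF {u w : Fin n → Pt n → ℝ} {p : Pt n}
    (hu : ∀ i, DifferentiableAt ℝ (u i) p) (hw : ∀ i, DifferentiableAt ℝ (w i) p) :
    lie (vertVF u) (vertVF w) p =
      (0, fun i => fderiv ℝ (w i) p (vertVF u p) - fderiv ℝ (u i) p (vertVF w p)) := by
  rw [lie, fderiv_vertVF_apply hu, fderiv_vertVF_apply hw]
  ext i <;> simp

/-- The fundamental tensor at `p` as a bilinear form on fibre vectors;
`gb fc E p a b` is `gForm fc p (E a · p) (E b · p)` by definition. -/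
def gForm (p : Pt n) (u w : Fin n → ℝ) : ℝ := ∑ i, ∑ j, fc.g i j p * u i * w j

theorem Gs_vertical (p : Pt n) (u w : Fin n → ℝ) :
    Gs fc p (0, u) (0, w) = gForm fc p u w := by
  simp [Gs, dely, gForm, mul_assoc]

theorem gForm_comm {p : Pt n} (hp : p ∈ fc.U) (u w : Fin n → ℝ) :
    gForm fc p u w = gForm fc p w u := by
  rw [gForm, Finset.sum_comm]
  refine Finset.sum_congr rfl fun i _ => Finset.sum_congr rfl fun j _ => ?_
  rw [fc.gsymm j i p hp]
  ring

theorem gForm_sub_left (p : Pt n) (u u' w : Fin n → ℝ) :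
    gForm fc p (fun i => u i - u' i) w = gForm fc p u w - gForm fc p u' w := by
  simp only [gForm, mul_sub, sub_mul, Finset.sum_sub_distrib]

theorem fderiv_gForm_apply {u w : Fin n → Pt n → ℝ} {p : Pt n} (hp : p ∈ fc.U)
    (hu : ∀ i, DifferentiableAt ℝ (u i) p) (hw : ∀ j, DifferentiableAt ℝ (w j) p) (v : Pt n) :
    fderiv ℝ (fun q => gForm fc q (fun i => u i q) (fun j => w j q)) p v =
      (∑ i, ∑ j, fderiv ℝ (fc.g i j) p v * u i p * w j p)
      + gForm fc p (fun i => fderiv ℝ (u i) p v) (fun j => w j p)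
      + gForm fc p (fun i => u i p) (fun j => fderiv ℝ (w j) p v) := by
  have hg : ∀ i j, DifferentiableAt ℝ (fc.g i j) p := fun i j =>
    ContDiffOn.differentiableAt_of_isOpen fc.hUopen (fc.gsmooth i j) hp
  have h := HasFDerivAt.fun_sum (u := Finset.univ) fun i _ =>
    HasFDerivAt.fun_sum (u := Finset.univ) fun j _ =>
      ((hg i j).hasFDerivAt.fun_mul (hu i).hasFDerivAt).fun_mul (hw j).hasFDerivAt
  change fderiv ℝ (fun q => ∑ i, ∑ j, fc.g i j q * u i q * w j q) p v = _
  rw [h.fderiv]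
  simp only [gForm, sum_apply, add_apply, smul_apply, smul_eq_mul, ← Finset.sum_add_distrib]
  exact Finset.sum_congr rfl fun i _ => Finset.sum_congr rfl fun j _ => by ring

theorem contDiffOn_sq_F : ContDiffOn ℝ (⊤ : ℕ∞) (fun q => fc.F q ^ 2) fc.U :=
  fc.Fsmooth.pow 2

theorem sq_F_homogeneous : IsFiberHomogeneousOn fc.U 2 (fun q => fc.F q ^ 2) := by
  intro p hp t ht hq
  simp only [fc.Fhomog p hp t ht hq]
  ring

theorem fderiv_sq_F_homogeneous (u : Fin n → ℝ) :
    IsFiberHomogeneousOn fc.U 1 (fun q => fderiv ℝ (fun r => fc.F r ^ 2) q (0, u)) :=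
  (sq_F_homogeneous fc).fderiv_apply_const_fiber fc.hUopen
    ((contDiffOn_sq_F fc).differentiableOn (by decide)) (by norm_num) u

theorem g_homogeneous (i j : Fin n) : IsFiberHomogeneousOn fc.U 0 (fc.g i j) := by
  have h := (fderiv_sq_F_homogeneous fc (Pi.single j 1)).fderiv_apply_const_fiber fc.hUopen
    ((contDiffOn_fderiv_apply_of_isOpen fc.hUopen (contDiffOn_sq_F fc) _).differentiableOn
      (by decide)) le_rfl (Pi.single i 1)
  intro p hp t ht hq
  rw [fc.gdef i j _ hq, fc.gdef i j p hp]
  have hpq := h p hp t ht hq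
  rw [Nat.sub_self, pow_zero, one_mul] at hpq
  rw [pow_zero, one_mul]
  exact congrArg (1 / 2 * ·) hpq

theorem fderiv_g_LV (i j : Fin n) {p : Pt n} (hp : p ∈ fc.U) :
    fderiv ℝ (fc.g i j) p (LV p) = 0 := by
  simpa [LV] using (g_homogeneous fc i j).fderiv_apply_fiber fc.hUopen hp
    (ContDiffOn.differentiableAt_of_isOpen fc.hUopen (fc.gsmooth i j) hp)

theorem gForm_eq_fderiv_fderiv {p : Pt n} (hp : p ∈ fc.U) (u w : Fin n → ℝ) :
    gForm fc p u w =
      1 / 2 * fderiv ℝ (fun q => fderiv ℝ (fun r => fc.F r ^ 2) q (0, w)) p (0, u) := by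
  have hD : DifferentiableAt ℝ (fderiv ℝ (fun r => fc.F r ^ 2)) p :=
    ContDiffOn.differentiableAt_of_isOpen fc.hUopen
      ((contDiffOn_sq_F fc).fderiv_of_isOpen fc.hUopen (m := (⊤ : ℕ∞)) (by decide)) hp
  have hg : ∀ i j, fc.g i j p = 1 / 2 * fderiv ℝ (fderiv ℝ (fun r => fc.F r ^ 2)) p (ey i) (ey j) :=
    fun i j => by rw [fc.gdef i j p hp]; unfold pd; rw [fderiv_fderiv_apply_const hD]
  rw [fderiv_fderiv_apply_const hD, vertical_eq_sum_smul_ey u, vertical_eq_sum_smul_ey w]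
  simp only [gForm, hg, map_sum, map_smul, sum_apply, smul_apply, smul_eq_mul, Finset.mul_sum]
  rw [Finset.sum_comm]
  exact Finset.sum_congr rfl fun i _ => Finset.sum_congr rfl fun j _ => by ring

theorem gForm_fiber_left {p : Pt n} (hp : p ∈ fc.U) (w : Fin n → ℝ) :
    gForm fc p p.2 w = 1 / 2 * fderiv ℝ (fun r => fc.F r ^ 2) p (0, w) := by
  have hd : DifferentiableAt ℝ (fun q => fderiv ℝ (fun r => fc.F r ^ 2) q (0, w)) p :=
    ContDiffOn.differentiableAt_of_isOpen fc.hUopen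
      (contDiffOn_fderiv_apply_of_isOpen fc.hUopen (contDiffOn_sq_F fc) _) hp
  rw [gForm_eq_fderiv_fderiv fc hp,
    (fderiv_sq_F_homogeneous fc w).fderiv_apply_fiber fc.hUopen hp hd]
  simp

theorem Gs_LV_LV {p : Pt n} (hp : p ∈ fc.U) : Gs fc p (LV p) (LV p) = fc.F p ^ 2 := by
  have hd : DifferentiableAt ℝ (fun r => fc.F r ^ 2) p :=
    ContDiffOn.differentiableAt_of_isOpen fc.hUopen (contDiffOn_sq_F fc) hp
  rw [LV, Gs_vertical, gForm_fiber_left fc hp,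
    (sq_F_homogeneous fc).fderiv_apply_fiber fc.hUopen hp hd]
  ring

theorem sum_fderiv_g_mul_fiber {p : Pt n} (hp : p ∈ fc.U) (u w : Fin n → ℝ) :
    ∑ i, ∑ j, fderiv ℝ (fc.g i j) p (0, u) * w i * p.2 j = 0 := by
  have hd : DifferentiableAt ℝ (fun q => fderiv ℝ (fun r => fc.F r ^ 2) q (0, w)) p :=
    ContDiffOn.differentiableAt_of_isOpen fc.hUopen
      (contDiffOn_fderiv_apply_of_isOpen fc.hUopen (contDiffOn_sq_F fc) _) hp
  have heq : (fun q => gForm fc q (fun i => w i) (fun j => q.2 j)) =ᶠ[𝓝 p]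
      fun q => 1 / 2 * fderiv ℝ (fun r => fc.F r ^ 2) q (0, w) :=
    Filter.eventually_of_mem (fc.hUopen.mem_nhds hp) fun q hq => by
      change gForm fc q w q.2 = _
      rw [gForm_comm fc hq, gForm_fiber_left fc hq]
  -- differentiate `g(w, y) = ½ dF²(0, w)` along `(0, u)`: the right side is `g(u, w)` again,
  -- so the `∂g` term vanishes
  have h := fderiv_gForm_apply fc hp (u := fun i _ => w i) (fun _ => differentiableAt_const _)
    (fun j => (hasFDerivAt_fiber_coord j p).differentiableAt) (0, u)
  rw [heq.fderiv_eq, fderiv_const_mul hd, smul_apply, smul_eq_mul,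
    ← gForm_eq_fderiv_fderiv fc hp] at h
  simp only [fderiv_const_apply, zero_apply, (hasFDerivAt_fiber_coord _ p).fderiv,
    ContinuousLinearMap.comp_apply, ContinuousLinearMap.coe_snd',
    ContinuousLinearMap.proj_apply] at h
  have h0 : gForm fc p (fun _ => 0) p.2 = 0 := by simp [gForm]
  rw [h0, gForm_comm fc hp u] at h
  linarith

theorem gForm_fderiv_fiber_of_orthogonal {w : Fin n → Pt n → ℝ}
    (hw : ∀ i, ContDiffOn ℝ (⊤ : ℕ∞) (w i) fc.U)
    (hwL : ∀ q ∈ fc.U, Gs fc q (vertVF w q) (LV q) = 0) {p : Pt n} (hp : p ∈ fc.U)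
    (u : Fin n → ℝ) :
    gForm fc p (fun i => fderiv ℝ (w i) p (0, u)) p.2 = - gForm fc p (fun i => w i p) u := by
  have hd : ∀ i, DifferentiableAt ℝ (w i) p := fun i =>
    ContDiffOn.differentiableAt_of_isOpen fc.hUopen (hw i) hp
  have h := fderiv_gForm_apply fc hp (w := fun j q => q.2 j) hd
    (fun j => (hasFDerivAt_fiber_coord j p).differentiableAt) (0, u)
  rw [fderiv_eq_zero_of_eqOn_zero fc.hUopen (fun q hq => (Gs_vertical fc q _ _).symm.trans
    (hwL q hq)) hp, sum_fderiv_g_mul_fiber fc hp] at h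
  simp only [(hasFDerivAt_fiber_coord _ p).fderiv, ContinuousLinearMap.comp_apply,
    ContinuousLinearMap.coe_snd', ContinuousLinearMap.proj_apply, zero_apply] at h
  linarith

theorem Gs_nabla_vertVF_LV {nab : VF n → VF n → VF n} (hnab : IsLeviCivita fc nab)
    {u w : Fin n → Pt n → ℝ} (hu : ∀ i, ContDiffOn ℝ (⊤ : ℕ∞) (u i) fc.U)
    (hw : ∀ i, ContDiffOn ℝ (⊤ : ℕ∞) (w i) fc.U)
    (huL : ∀ q ∈ fc.U, Gs fc q (vertVF u q) (LV q) = 0)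
    (hwL : ∀ q ∈ fc.U, Gs fc q (vertVF w q) (LV q) = 0) {p : Pt n} (hp : p ∈ fc.U) :
    Gs fc p (nab (vertVF u) (vertVF w) p) (LV p) =
      - gForm fc p (fun i => u i p) (fun i => w i p) := by
  have hdu : ∀ i, DifferentiableAt ℝ (u i) p := fun i =>
    ContDiffOn.differentiableAt_of_isOpen fc.hUopen (hu i) hp
  have hdw : ∀ i, DifferentiableAt ℝ (w i) p := fun i =>
    ContDiffOn.differentiableAt_of_isOpen fc.hUopen (hw i) hp
  have hkoszul := hnab _ _ _ (contDiffOn_vertVF hu) (contDiffOn_vertVF hw) (contDiffOn_LV _) p hp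
  have h₁ : Dv (vertVF u) (fun q => Gs fc q (vertVF w q) (LV q)) p = 0 := by
    rw [Dv, fderiv_eq_zero_of_eqOn_zero fc.hUopen hwL hp, zero_apply]
  have h₂ : Dv (vertVF w) (fun q => Gs fc q (vertVF u q) (LV q)) p = 0 := by
    rw [Dv, fderiv_eq_zero_of_eqOn_zero fc.hUopen huL hp, zero_apply]
  have h₃ : Dv LV (fun q => Gs fc q (vertVF u q) (vertVF w q)) p =
      gForm fc p (fun i => fderiv ℝ (u i) p (LV p)) (fun i => w i p)
        + gForm fc p (fun i => u i p) (fun i => fderiv ℝ (w i) p (LV p)) := by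
    change fderiv ℝ (fun q => Gs fc q (0, fun i => u i q) (0, fun i => w i q)) p (LV p) = _
    simp only [Gs_vertical, fderiv_gForm_apply fc hp hdu hdw, fderiv_g_LV fc _ _ hp,
      zero_mul, Finset.sum_const_zero, zero_add]
  have h₄ : Gs fc p (lie (vertVF u) LV p) (vertVF w p) =
      gForm fc p (fun i => u i p) (fun i => w i p)
        - gForm fc p (fun i => fderiv ℝ (u i) p (LV p)) (fun i => w i p) := by
    rw [lie_vertVF_LV hdu, vertVF, Gs_vertical, gForm_sub_left]
  have h₅ : Gs fc p (lie (vertVF w) LV p) (vertVF u p) =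
      gForm fc p (fun i => w i p) (fun i => u i p)
        - gForm fc p (fun i => fderiv ℝ (w i) p (LV p)) (fun i => u i p) := by
    rw [lie_vertVF_LV hdw, vertVF, Gs_vertical, gForm_sub_left]
  -- differentiating `G(Y, L) = 0` along `X` turns `G(∂_X Y, L)` into `-g(w, u)`, and symmetrically
  have h₆ : Gs fc p (lie (vertVF u) (vertVF w) p) (LV p) = 0 := by
    rw [lie_vertVF_vertVF hdu hdw, LV, Gs_vertical, gForm_sub_left, vertVF, vertVF,
      gForm_fderiv_fiber_of_orthogonal fc hw hwL hp, gForm_fderiv_fiber_of_orthogonal fc hu huL hp,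
      gForm_comm fc hp]
    ring
  rw [h₁, h₂, h₃, h₄, h₅, h₆, gForm_comm fc hp (fun i => w i p),
    gForm_comm fc hp (fun i => u i p) (fun i => fderiv ℝ (w i) p (LV p))] at hkoszul
  linarith

theorem sum_sum_sum_sum_comm {α β γ δ : Type*} [Fintype α] [Fintype β] [Fintype γ] [Fintype δ]
    (f : α → β → γ → δ → ℝ) :
    ∑ a, ∑ b, ∑ i, ∑ j, f a b i j = ∑ i, ∑ j, ∑ a, ∑ b, f a b i j := by
  calc ∑ a, ∑ b, ∑ i, ∑ j, f a b i j = ∑ a, ∑ i, ∑ b, ∑ j, f a b i j :=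
        Finset.sum_congr rfl fun a _ => Finset.sum_comm
    _ = ∑ i, ∑ a, ∑ b, ∑ j, f a b i j := Finset.sum_comm
    _ = ∑ i, ∑ a, ∑ j, ∑ b, f a b i j :=
        Finset.sum_congr rfl fun i _ => Finset.sum_congr rfl fun a _ => Finset.sum_comm
    _ = ∑ i, ∑ j, ∑ a, ∑ b, f a b i j := Finset.sum_congr rfl fun i _ => Finset.sum_comm

theorem gb_quadratic_form_pos {E : Fin (n-1) → Fin n → Pt n → ℝ} (hE : IsAdaptedFrame fc E)
    {p : Pt n} (hp : p ∈ fc.U) {v : Fin (n-1) → ℝ} (hv : v ≠ 0) :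
    0 < ∑ a, ∑ b, gb fc E p a b * v a * v b := by
  set W : Fin n → ℝ := ∑ a, v a • fun i => E a i p
  have hW : W ≠ 0 := fun h => hv (funext (Fintype.linearIndependent_iff.1 (hE.2.1 p hp) v h))
  have hsum : ∑ a, ∑ b, gb fc E p a b * v a * v b = ∑ i, ∑ j, fc.g i j p * W i * W j := by
    simp only [W, gb, Finset.sum_apply, Pi.smul_apply, smul_eq_mul, Finset.sum_mul,
      Finset.mul_sum]
    rw [sum_sum_sum_sum_comm]
    refine Finset.sum_congr rfl fun i _ => Finset.sum_congr rfl fun j _ => ?_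
    rw [Finset.sum_comm]
    exact Finset.sum_congr rfl fun a _ => Finset.sum_congr rfl fun b _ => by ring
  exact hsum ▸ fc.gposdef p hp W hW

/-- For any Finsler manifold `(M,F)`, neither the foliation
`V'TM` nor the foliation `V^⊥TM` is totally geodesic for the Levi-Civita
connection `∇` of the Sasaki metric `G` on `TM`: for both foliations the
second fundamental form satisfies
`H(∂̄/∂̄y^a, ∂̄/∂̄y^b) = −(1/F²) g_{ab} L`, which cannot vanish since the
matrix `(g_{ab})` is positive definite. -/
theorem Vprime_Vperp_not_totally_geodesic {n : ℕ} (hn : 2 ≤ n) (fc : Chart n)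
    (hU : fc.U.Nonempty)
    (E : Fin (n-1) → Fin n → Pt n → ℝ) (hE : IsAdaptedFrame fc E)
    (nab : VF n → VF n → VF n) (hnab : IsLeviCivita fc nab) :
    (∀ a b : Fin (n-1), ∀ p ∈ fc.U,
      projL fc (nab (vb E a) (vb E b)) p
        = (-(1 / fc.F p ^ 2) * gb fc E p a b) • LV p) ∧
    (∀ p ∈ fc.U, ∀ v : Fin (n-1) → ℝ, v ≠ 0 →
      0 < ∑ a, ∑ b, gb fc E p a b * v a * v b) ∧
    ¬ (∀ X Y : VF n, ContDiffOn ℝ (⊤ : ℕ∞) X fc.U →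
        ContDiffOn ℝ (⊤ : ℕ∞) Y fc.U →
        (∀ p ∈ fc.U, InV' fc p (X p)) → (∀ p ∈ fc.U, InV' fc p (Y p)) →
        ∀ p ∈ fc.U, InV' fc p (nab X Y p)) ∧
    ¬ (∀ X Y : VF n, ContDiffOn ℝ (⊤ : ℕ∞) X fc.U →
        ContDiffOn ℝ (⊤ : ℕ∞) Y fc.U →
        (∀ p ∈ fc.U, InVperp fc p (X p)) → (∀ p ∈ fc.U, InVperp fc p (Y p)) →
        ∀ p ∈ fc.U, InVperp fc p (nab X Y p)) := by
  obtain ⟨p₀, hp₀⟩ := hU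
  have hH : ∀ a b, ∀ p ∈ fc.U, Gs fc p (nab (vb E a) (vb E b) p) (LV p) = - gb fc E p a b :=
    fun a b p hp => Gs_nabla_vertVF_LV fc hnab (hE.1 a) (hE.1 b) (hE.2.2 a) (hE.2.2 b) hp
  have hsmooth (a : Fin (n-1)) : ContDiffOn ℝ (⊤ : ℕ∞) (vb E a) fc.U := contDiffOn_vertVF (hE.1 a)
  let a₀ : Fin (n-1) := ⟨0, by omega⟩
  have hgb : 0 < gb fc E p₀ a₀ a₀ := fc.gposdef p₀ hp₀ _ ((hE.2.1 p₀ hp₀).ne_zero a₀)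
  refine ⟨fun a b p hp => ?_, fun p hp v hv => gb_quadratic_form_pos fc hE hp hv,
    fun h => ?_, fun h => ?_⟩
  · rw [projL, hH a b p hp, Gs_LV_LV fc hp]
    ring_nf
  · have := (h _ _ (hsmooth a₀) (hsmooth a₀) (fun p hp => ⟨rfl, hE.2.2 a₀ p hp⟩)
      (fun p hp => ⟨rfl, hE.2.2 a₀ p hp⟩) p₀ hp₀).2
    linarith [hH a₀ a₀ p₀ hp₀]
  · have : Gs fc p₀ (nab (vb E a₀) (vb E a₀) p₀) (LV p₀) = 0 :=
      h _ _ (hsmooth a₀) (hsmooth a₀) (hE.2.2 a₀) (hE.2.2 a₀) p₀ hp₀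
    linarith [hH a₀ a₀ p₀ hp₀]

end FinslerFoliations

end
end

section
/- On the tangent bundle TM of a Finsler manifold (M,F), the Nijenhuis tensor N_J of the natural almost complex structure J satisfies N_J(δ/δx^i, δ/δx^j) = −N_J(∂/∂y^i, ∂/∂y^j) = −R^k_{ij} ∂/∂y^k and N_J(δ/δx^i, ∂/∂y^j) = −R^k_{ij} δ/δx^k, where R^k_{ij} = δG_i^k/δx^j − δG_j^k/δx^i; consequently J is integrable if and only if the curvature of the nonlinear connection vanishes, i.e. M is flat. -/
/-!
A local-coordinate framework for the geometry of the tangent bundle `TM` of an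
`n`-dimensional Finsler manifold `(M, F)`, following the paper
"A frame on tangent bundle of a Finsler manifold and the natural foliations".

All geometric objects are described through their components on a chart domain
`U` of `TM` (avoiding the zero section): a point `p : Pt n` is the pair of
coordinates `(x^i, y^i)`, and a vector field on `TM` is given by its
components in the natural frame `(∂/∂x^i, ∂/∂y^i)`.
-/

open scoped BigOperators

noncomputable section

namespace FinslerFoliations

variable {n : ℕ}

variable (fc : Chart n)

/-!
`J` exchanges the two halves of the frame `(δ/δx^i, ∂/∂y^i)`, `J (∂/∂y^i) = δ/δx^i` and
`J (δ/δx^i) = -∂/∂y^i`, so on frame fields `N_J` is a combination of the brackets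
`[∂/∂y^j, δ/δx^i] = -(∂G_i^k/∂y^j) ∂/∂y^k` and `[δ/δx^i, δ/δx^j] = R^k_{ij} ∂/∂y^k`. The first
is symmetric in `i, j` because `G_i^k = ∂G^k/∂y^i`, and what survives is the curvature.

For the integrability criterion, `N_J` is a tensor: differentiating `J` as a field of
endomorphisms gives `N_J(X,Y) = (D_{JX}J)Y - (D_{JY}J)X + J(D_Y J)X - J(D_X J)Y`, which is
bilinear in the values of `X` and `Y`, so it vanishes once it vanishes on the frame.
-/

section AlmostComplex

variable {n : ℕ} (fc : Chart n) (p : Pt n)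

lemma dely_add (i : Fin n) (v w : Pt n) :
    dely fc i p (v + w) = dely fc i p v + dely fc i p w := by
  simp only [dely, Prod.fst_add, Prod.snd_add, Pi.add_apply, mul_add, Finset.sum_add_distrib]
  ring

lemma dely_smul (i : Fin n) (c : ℝ) (v : Pt n) : dely fc i p (c • v) = c * dely fc i p v := by
  simp only [dely, Prod.smul_fst, Prod.smul_snd, Pi.smul_apply, smul_eq_mul, mul_add,
    Finset.mul_sum, mul_left_comm]

lemma Jm_add (v w : Pt n) : Jm fc p (v + w) = Jm fc p v + Jm fc p w := by
  ext k <;> simp [Jm, dely_add, add_mul, Finset.sum_add_distrib]; ring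

lemma Jm_smul (c : ℝ) (v : Pt n) : Jm fc p (c • v) = c • Jm fc p v := by
  ext k
  · simp [Jm, dely_smul]
  · simp only [Jm, dely_smul, Prod.smul_fst, Prod.smul_snd, Pi.smul_apply, smul_eq_mul, mul_assoc,
      ← Finset.mul_sum]
    ring

def Jclm : Pt n →L[ℝ] Pt n :=
  LinearMap.toContinuousLinearMap
    { toFun := Jm fc p, map_add' := Jm_add fc p, map_smul' := Jm_smul fc p }

@[simp] lemma Jclm_apply (v : Pt n) : Jclm fc p v = Jm fc p v := rfl

lemma Jm_zero : Jm fc p 0 = 0 := map_zero (Jclm fc p)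

lemma Jm_neg (v : Pt n) : Jm fc p (-v) = -Jm fc p v := map_neg (Jclm fc p) v

lemma dely_Jm (i : Fin n) (v : Pt n) : dely fc i p (Jm fc p v) = -v.1 i := by
  simp only [dely, Jm, mul_comm (fc.N _ i p)]
  ring

lemma Jm_Jm (v : Pt n) : Jm fc p (Jm fc p v) = -v := by
  ext k
  · exact dely_Jm fc p k v
  · change -(∑ i, dely fc i p (Jm fc p v) * fc.N i k p) - (Jm fc p v).1 k = -v.2 k
    simp only [dely_Jm]
    simp [Jm, dely, mul_comm]

lemma sum_smul_ey (c : Fin n → ℝ) : ∑ k, c k • (ey k : Pt n) = (0, c) := by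
  ext m <;> simp [ey, Prod.fst_sum, Prod.snd_sum, Finset.sum_apply, Pi.single_apply]

lemma ddx_eq_sub (i : Fin n) : ddx fc i p = ex i - ∑ k, fc.N i k p • ey k := by
  rw [sum_smul_ey]; ext <;> simp [ddx, ex]

lemma Jm_ey (i : Fin n) : Jm fc p (ey i) = ddx fc i p := by
  ext k <;> simp [Jm, dely, ey, ddx, Pi.single_apply]

lemma Jm_ddx (i : Fin n) : Jm fc p (ddx fc i p) = -ey i := by
  ext k <;> simp [Jm, dely, ey, ddx, Pi.single_apply]

lemma Jm_sum_smul_ey (c : Fin n → ℝ) : Jm fc p (∑ k, c k • ey k) = ∑ k, c k • ddx fc k p := by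
  rw [← Jclm_apply, map_sum]
  simp [Jm_ey]

end AlmostComplex

section MatrixSmoothness

variable {𝕜 : Type*} [NontriviallyNormedField 𝕜] {E : Type*} [NormedAddCommGroup E]
  [NormedSpace 𝕜 E] {ι : Type*} [Fintype ι] [DecidableEq ι] {A : E → Matrix ι ι 𝕜} {s : Set E}
  {m : WithTop ℕ∞}

lemma contDiffOn_det (hA : ∀ i j, ContDiffOn 𝕜 m (fun x => A x i j) s) :
    ContDiffOn 𝕜 m (fun x => (A x).det) s := by
  simp only [Matrix.det_apply']
  exact ContDiffOn.sum fun σ _ => contDiffOn_const.mul (contDiffOn_prod fun i _ => hA _ _)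

lemma contDiffOn_adjugate_apply (hA : ∀ i j, ContDiffOn 𝕜 m (fun x => A x i j) s) (i j : ι) :
    ContDiffOn 𝕜 m (fun x => (A x).adjugate i j) s := by
  simp only [Matrix.adjugate_apply]
  refine contDiffOn_det fun a b => ?_
  simp only [Matrix.updateRow_apply]
  split_ifs
  exacts [contDiffOn_const, hA a b]

lemma contDiffOn_inv_apply [CompleteSpace 𝕜] (hA : ∀ i j, ContDiffOn 𝕜 m (fun x => A x i j) s)
    (hdet : ∀ x ∈ s, (A x).det ≠ 0) (i j : ι) :
    ContDiffOn 𝕜 m (fun x => (A x)⁻¹ i j) s := by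
  refine (((contDiffOn_det hA).inv hdet).mul (contDiffOn_adjugate_apply hA i j)).congr
    fun x _ => ?_
  simp [Matrix.inv_def, Ring.inverse_eq_inv']

end MatrixSmoothness

section Smoothness

variable {n : ℕ} (fc : Chart n) {p : Pt n}

lemma Chart.differentiableAt_of_contDiffOn {F : Type*} [NormedAddCommGroup F] [NormedSpace ℝ F]
    {f : Pt n → F} (hf : ContDiffOn ℝ (⊤ : ℕ∞) f fc.U) (hp : p ∈ fc.U) :
    DifferentiableAt ℝ f p :=
  (hf.contDiffAt (fc.hUopen.mem_nhds hp)).differentiableAt (by simp)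

def gmat (q : Pt n) : Matrix (Fin n) (Fin n) ℝ := Matrix.of fun i j => fc.g i j q

lemma gmat_mul_ginv {q : Pt n} (hq : q ∈ fc.U) :
    gmat fc q * Matrix.of (fun i j => fc.ginv i j q) = 1 := by
  ext i j
  simpa [gmat, Matrix.mul_apply, Matrix.one_apply] using fc.hginv i j q hq

lemma contDiffOn_ginv (i j : Fin n) : ContDiffOn ℝ (⊤ : ℕ∞) (fc.ginv i j) fc.U := by
  refine (contDiffOn_inv_apply (A := gmat fc) (fun a b => fc.gsmooth a b)
    (fun q hq => (Matrix.isUnit_det_of_right_inverse (gmat_mul_ginv fc hq)).ne_zero) i j).congr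
    fun q hq => ?_
  rw [Matrix.inv_eq_right_inv (gmat_mul_ginv fc hq)]
  rfl

lemma contDiffOn_pd {s : Set (Pt n)} (hs : IsOpen s) {f : Pt n → ℝ}
    (hf : ContDiffOn ℝ (⊤ : ℕ∞) f s) (v : Pt n) : ContDiffOn ℝ (⊤ : ℕ∞) (pd v f) s :=
  (hf.fderiv_of_isOpen hs le_rfl).clm_apply contDiffOn_const

lemma contDiffOn_spray (k : Fin n) : ContDiffOn ℝ (⊤ : ℕ∞) (fc.spray k) fc.U := by
  have hF2 := contDiffOn_pd fc.hUopen (fc.Fsmooth.pow 2)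
  have hy : ∀ m : Fin n, ContDiffOn ℝ (⊤ : ℕ∞) (fun q : Pt n => q.2 m) fc.U :=
    fun m => (contDiff_pi.1 contDiff_snd m).contDiffOn
  refine (contDiffOn_const.mul (ContDiffOn.sum fun j _ => (contDiffOn_ginv fc k j).mul
    ((ContDiffOn.sum fun m _ => (contDiffOn_pd fc.hUopen (hF2 (ex m)) (ey j)).mul (hy m)).sub
      (hF2 (ex j))))).congr fun q hq => fc.spraydef k q hq

lemma fderiv_pd_comm {f : Pt n → ℝ} (hf : ContDiffAt ℝ 2 f p) (v w : Pt n) :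
    fderiv ℝ (pd v f) p w = fderiv ℝ (pd w f) p v := by
  have hd : DifferentiableAt ℝ (fderiv ℝ f) p :=
    (hf.fderiv_right (m := 1) le_rfl).differentiableAt one_ne_zero
  have hpd : ∀ u, fderiv ℝ (pd u f) p = (fderiv ℝ (fderiv ℝ f) p).flip u := fun u => by
    rw [show pd u f = fun q => fderiv ℝ f q u from rfl,
      fderiv_clm_apply hd (differentiableAt_const u)]
    simp
  simp only [hpd, ContinuousLinearMap.flip_apply]
  exact (hf.isSymmSndFDerivAt (by simp)).eq w v

lemma fderiv_N_ey_comm (hp : p ∈ fc.U) (i j k : Fin n) :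
    fderiv ℝ (fc.N j k) p (ey i) = fderiv ℝ (fc.N i k) p (ey j) := by
  have hN : ∀ a, fderiv ℝ (fc.N a k) p = fderiv ℝ (pd (ey a) (fc.spray k)) p := fun a =>
    Filter.EventuallyEq.fderiv_eq
      (Filter.eventually_of_mem (fc.hUopen.mem_nhds hp) fun q hq => fc.Ndef a k q hq)
  rw [hN, hN]
  exact fderiv_pd_comm
    (((contDiffOn_spray fc k).contDiffAt (fc.hUopen.mem_nhds hp)).of_le (by norm_cast)) _ _

end Smoothness

section Brackets

variable {n : ℕ}

lemma lie_neg_left (X Y : VF n) : lie (-X) Y = -lie X Y := by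
  ext1 p; simp [lie, fderiv_neg]; abel

lemma lie_neg_right (X Y : VF n) : lie X (-Y) = -lie X Y := by
  ext1 p; simp [lie, fderiv_neg]; abel

lemma lie_skew (X Y : VF n) : -lie Y X = lie X Y := by
  ext1 p; simp [lie]

lemma fderiv_dyv (i : Fin n) (p : Pt n) : fderiv ℝ (dyv i) p = 0 := fderiv_const_apply (ey i)

lemma lie_dyv_dyv (i j : Fin n) : lie (dyv i) (dyv j) = 0 := by
  ext1 p; simp [lie, fderiv_dyv]

variable (fc : Chart n) {p : Pt n}

lemma Jvf_dyv (i : Fin n) : Jvf fc (dyv i) = ddx fc i := funext fun p => Jm_ey fc p i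

lemma Jvf_ddx (i : Fin n) : Jvf fc (ddx fc i) = -dyv i := funext fun p => Jm_ddx fc p i

lemma contDiffOn_ddx (i : Fin n) : ContDiffOn ℝ (⊤ : ℕ∞) (ddx fc i) fc.U := by
  rw [funext (ddx_eq_sub fc · i)]
  exact contDiffOn_const.sub (ContDiffOn.sum fun k _ => (fc.Nsmooth i k).smul contDiffOn_const)

lemma fderiv_ddx_apply (hp : p ∈ fc.U) (i : Fin n) (h : Pt n) :
    fderiv ℝ (ddx fc i) p h = -∑ k, fderiv ℝ (fc.N i k) p h • ey k := by
  have hd : HasFDerivAt (ddx fc i) (-∑ k, (fderiv ℝ (fc.N i k) p).smulRight (ey k)) p := by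
    rw [funext (ddx_eq_sub fc · i)]
    refine (HasFDerivAt.fun_sum fun k _ => ?_).const_sub (ex i)
    exact (fc.differentiableAt_of_contDiffOn (fc.Nsmooth i k) hp).hasFDerivAt.smul_const (ey k)
  simp [hd.fderiv]

lemma lie_dyv_ddx (hp : p ∈ fc.U) (i j : Fin n) :
    lie (dyv j) (ddx fc i) p = -∑ k, fderiv ℝ (fc.N i k) p (ey j) • ey k := by
  simp [lie, dyv, fderiv_dyv, fderiv_ddx_apply fc hp]

lemma lie_dyv_ddx_comm (hp : p ∈ fc.U) (i j : Fin n) :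
    lie (dyv j) (ddx fc i) p = lie (dyv i) (ddx fc j) p := by
  simp only [lie_dyv_ddx fc hp, fderiv_N_ey_comm fc hp j i]

lemma lie_ddx_ddx (hp : p ∈ fc.U) (i j : Fin n) :
    lie (ddx fc i) (ddx fc j) p = ∑ k, Rc fc i j k p • ey k := by
  simp only [lie, fderiv_ddx_apply fc hp, Rc, Dv, sub_smul, Finset.sum_sub_distrib]
  abel

end Brackets

section NijenhuisFrame

variable {n : ℕ} (fc : Chart n) {p : Pt n}

lemma NijJ_ddx_ddx (hp : p ∈ fc.U) (i j : Fin n) :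
    NijJ fc (ddx fc i) (ddx fc j) p = -∑ k, Rc fc i j k p • ey k := by
  simp only [NijJ, Jvf_ddx, lie_neg_left, lie_neg_right, neg_neg, lie_dyv_dyv,
    ← lie_skew (ddx fc i), Pi.neg_apply, Pi.zero_apply, Jm_neg, lie_dyv_ddx_comm fc hp i j,
    lie_ddx_ddx fc hp]
  abel

lemma NijJ_dyv_dyv (hp : p ∈ fc.U) (i j : Fin n) :
    NijJ fc (dyv i) (dyv j) p = ∑ k, Rc fc i j k p • ey k := by
  simp only [NijJ, Jvf_dyv, lie_dyv_dyv, ← lie_skew (ddx fc i), Pi.neg_apply, Pi.zero_apply,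
    Jm_neg, lie_dyv_ddx_comm fc hp i j, lie_ddx_ddx fc hp]
  abel

lemma NijJ_ddx_dyv (hp : p ∈ fc.U) (i j : Fin n) :
    NijJ fc (ddx fc i) (dyv j) p = -∑ k, Rc fc i j k p • ddx fc k p := by
  simp only [NijJ, Jvf_ddx, Jvf_dyv, lie_neg_left, lie_dyv_dyv, ← lie_skew (ddx fc i),
    Pi.neg_apply, Pi.zero_apply, neg_zero, Jm_zero, lie_dyv_ddx_comm fc hp i j, lie_ddx_ddx fc hp,
    Jm_sum_smul_ey]
  abel

end NijenhuisFrame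

section NijenhuisForm

variable {𝕜 : Type*} [NontriviallyNormedField 𝕜] {E : Type*} [NormedAddCommGroup E]
  [NormedSpace 𝕜 E] (D : E →L[𝕜] E →L[𝕜] E) (J : E →L[𝕜] E)

def nijenhuisForm : E →ₗ[𝕜] E →ₗ[𝕜] E :=
  LinearMap.mk₂ 𝕜 (fun v w => D (J v) w - D (J w) v + J (D w v) - J (D v w))
    (fun v v' w => by simp only [map_add, add_apply]; abel)
    (fun c v w => by simp only [map_smul, smul_apply, smul_sub, smul_add])
    (fun v w w' => by simp only [map_add, add_apply]; abel)
    (fun c v w => by simp only [map_smul, smul_apply, smul_sub, smul_add])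

lemma nijenhuisForm_apply (v w : E) :
    nijenhuisForm D J v w = D (J v) w - D (J w) v + J (D w v) - J (D v w) := rfl

lemma nijenhuisForm_swap (v w : E) : nijenhuisForm D J w v = -nijenhuisForm D J v w := by
  simp only [nijenhuisForm_apply]; abel

end NijenhuisForm

section Tensoriality

variable {n : ℕ} {p : Pt n}

theorem nijenhuis_eq_nijenhuisForm {J : Pt n → Pt n →L[ℝ] Pt n} {X Y : VF n}
    (hJ : DifferentiableAt ℝ J p) (hX : DifferentiableAt ℝ X p) (hY : DifferentiableAt ℝ Y p)
    (hJJ : ∀ v, J p (J p v) = -v) :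
    lie (fun q => J q (X q)) (fun q => J q (Y q)) p - J p (lie (fun q => J q (X q)) Y p)
      - J p (lie X (fun q => J q (Y q)) p) - lie X Y p
      = nijenhuisForm (fderiv ℝ J p) (J p) (X p) (Y p) := by
  simp only [lie, fderiv_clm_apply hJ hX, fderiv_clm_apply hJ hY, add_apply,
    ContinuousLinearMap.comp_apply, ContinuousLinearMap.flip_apply, map_sub, map_add, hJJ,
    nijenhuisForm_apply]
  abel

variable (fc : Chart n)

lemma contDiffOn_Jclm : ContDiffOn ℝ (⊤ : ℕ∞) (Jclm fc) fc.U := by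
  refine contDiffOn_clm_apply.2 fun v => ?_
  have hdely : ∀ i, ContDiffOn ℝ (⊤ : ℕ∞) (fun q => dely fc i q v) fc.U := fun i =>
    contDiffOn_const.add (ContDiffOn.sum fun j _ => (fc.Nsmooth j i).mul contDiffOn_const)
  exact (contDiffOn_pi.2 hdely).prodMk (contDiffOn_pi.2 fun k =>
    (ContDiffOn.sum fun i _ => (hdely i).mul (fc.Nsmooth i k)).neg.sub contDiffOn_const)

lemma NijJ_eq_nijenhuisForm (hp : p ∈ fc.U) {X Y : VF n} (hX : DifferentiableAt ℝ X p)
    (hY : DifferentiableAt ℝ Y p) :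
    NijJ fc X Y p = nijenhuisForm (fderiv ℝ (Jclm fc) p) (Jclm fc p) (X p) (Y p) := by
  have h := nijenhuis_eq_nijenhuisForm
    (fc.differentiableAt_of_contDiffOn (contDiffOn_Jclm fc) hp) hX hY (Jm_Jm fc p)
  simp only [Jclm_apply] at h
  exact h

end Tensoriality

section Flatness

variable {n : ℕ} (fc : Chart n) (p : Pt n)

def hvFrame : Fin n ⊕ Fin n → Pt n := Sum.elim (fun i => ddx fc i p) (fun i => dyv i p)

lemma sum_smul_ddx_add_sum_smul_ey (v : Pt n) :
    ∑ m, v.1 m • ddx fc m p + ∑ m, dely fc m p v • ey m = v := by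
  ext k <;> simp [ddx, ey, dely, Prod.fst_sum, Prod.snd_sum, Finset.sum_apply, Pi.single_apply,
    mul_comm]

lemma span_hvFrame : Submodule.span ℝ (Set.range (hvFrame fc p)) = ⊤ := by
  refine Submodule.eq_top_iff'.2 fun v => ?_
  rw [← sum_smul_ddx_add_sum_smul_ey fc p v]
  exact add_mem (sum_mem fun m _ => Submodule.smul_mem _ _ (Submodule.subset_span ⟨.inl m, rfl⟩))
    (sum_mem fun m _ => Submodule.smul_mem _ _ (Submodule.subset_span ⟨.inr m, rfl⟩))

variable {fc p}

lemma NijJ_eq_zero_of_Rc_eq_zero (hp : p ∈ fc.U) (hR : ∀ i j k, Rc fc i j k p = 0) {X Y : VF n}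
    (hX : DifferentiableAt ℝ X p) (hY : DifferentiableAt ℝ Y p) : NijJ fc X Y p = 0 := by
  have hddx i : DifferentiableAt ℝ (ddx fc i) p :=
    fc.differentiableAt_of_contDiffOn (contDiffOn_ddx fc i) hp
  have hdyv i : DifferentiableAt ℝ (dyv i : VF n) p := differentiableAt_const _
  rw [NijJ_eq_nijenhuisForm fc hp hX hY]
  suffices nijenhuisForm (fderiv ℝ (Jclm fc) p) (Jclm fc p) = 0 by simp [this]
  refine LinearMap.ext_on_range (span_hvFrame fc p) fun a => LinearMap.ext_on_range
    (span_hvFrame fc p) fun b => ?_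
  rcases a with i | i <;> rcases b with j | j <;>
    simp only [hvFrame, Sum.elim_inl, Sum.elim_inr, LinearMap.zero_apply]
  · rw [← NijJ_eq_nijenhuisForm fc hp (hddx i) (hddx j), NijJ_ddx_ddx fc hp]
    simp [hR]
  · rw [← NijJ_eq_nijenhuisForm fc hp (hddx i) (hdyv j), NijJ_ddx_dyv fc hp]
    simp [hR]
  · rw [nijenhuisForm_swap, ← NijJ_eq_nijenhuisForm fc hp (hddx j) (hdyv i), NijJ_ddx_dyv fc hp]
    simp [hR]
  · rw [← NijJ_eq_nijenhuisForm fc hp (hdyv i) (hdyv j), NijJ_dyv_dyv fc hp]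
    simp [hR]

end Flatness

/-- On the tangent bundle `TM` of a Finsler manifold, the
Nijenhuis tensor `N_J` of the natural almost complex structure `J` satisfies
`N_J(δ/δx^i, δ/δx^j) = −N_J(∂/∂y^i, ∂/∂y^j) = −R^k_{ij} ∂/∂y^k` and
`N_J(δ/δx^i, ∂/∂y^j) = −R^k_{ij} δ/δx^k`, where
`R^k_{ij} = δG_i^k/δx^j − δG_j^k/δx^i`; consequently `J` is integrable
(`N_J ≡ 0`) if and only if the curvature of the nonlinear connection
vanishes, i.e. `M` is flat. -/
theorem nijenhuis_tensor_of_J {n : ℕ} (fc : Chart n) :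
    (∀ i j : Fin n, ∀ p ∈ fc.U,
      (NijJ fc (ddx fc i) (ddx fc j) p = -(∑ k, Rc fc i j k p • (ey k : Pt n))) ∧
      (NijJ fc (dyv i) (dyv j) p = ∑ k, Rc fc i j k p • (ey k : Pt n)) ∧
      (NijJ fc (ddx fc i) (dyv j) p = -(∑ k, Rc fc i j k p • ddx fc k p))) ∧
    ((∀ X Y : VF n, ContDiffOn ℝ (⊤ : ℕ∞) X fc.U →
        ContDiffOn ℝ (⊤ : ℕ∞) Y fc.U →
        ∀ p ∈ fc.U, NijJ fc X Y p = 0)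
      ↔ (∀ i j k : Fin n, ∀ p ∈ fc.U, Rc fc i j k p = 0)) := by
  refine ⟨fun i j p hp => ⟨NijJ_ddx_ddx fc hp i j, NijJ_dyv_dyv fc hp i j, NijJ_ddx_dyv fc hp i j⟩,
    fun hN i j k p hp => ?_, fun hR X Y hX hY p hp => ?_⟩
  · have h := NijJ_ddx_ddx fc hp i j
    rw [hN _ _ (contDiffOn_ddx fc i) (contDiffOn_ddx fc j) p hp, eq_comm, neg_eq_zero,
      sum_smul_ey] at h
    exact congrFun (congrArg Prod.snd h) k
  · exact NijJ_eq_zero_of_Rc_eq_zero hp (fun i j k => hR i j k p hp)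
      (fc.differentiableAt_of_contDiffOn hX hp) (fc.differentiableAt_of_contDiffOn hY hp)

end FinslerFoliations

end
end
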